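/- Suppose f : ℝ² → 𝔽² preserves every distance d > 0 with d² rational. Then f preserves collinearity: if A, B, C ∈ ℝ² are collinear, then f(A), f(B), f(C) ∈ 𝔽² are collinear (affinely dependent over 𝔽). -/

import Mathlib

/-!
Let `O` be at distance `1` from the line `ℓ` through `A`, `B`, `C` and `Q` the midpoint of `O` and
its foot on `ℓ`, so that `2 ⟪X - O, Q - O⟫ = 1` for `X ∈ ℓ`; inversion in the unit circle about `O`
maps `ℓ` onto the circle of radius `1/2` about `Q`. For `X ∈ ℓ` with inverse `D` and a rational
`L > |X - O|²`, the circles `|P - O|² = L` and `|P - X|² = L - 1` meet in two points `P₁ ≠ P₂`,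
which are also at squared distance `L - 1` from `D`. All these squared distances are rational, so
they survive `f`, and over any field of characteristic `≠ 2` they force
`2 ⟪f X - f O, f Q - f O⟫ = 1`. Hence `f A`, `f B`, `f C` lie on one line with normal
`f Q - f O ≠ 0`, `f` being injective.
-/

namespace Plane

variable {K : Type*}

section CommRing

variable [CommRing K]

def dot (u v : K × K) : K := u.1 * v.1 + u.2 * v.2

def sqDist (x y : K × K) : K := (x.1 - y.1) ^ 2 + (x.2 - y.2) ^ 2

def rot (u : K × K) : K × K := (-u.2, u.1)

theorem four_mul_sqDist_eq {P₁ P₂ Y : K × K} {k : K}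
    (h : (2 : K) • Y - (P₁ + P₂) = k • rot (P₁ - P₂)) :
    4 * sqDist P₁ Y = (1 + k ^ 2) * sqDist P₁ P₂ := by
  obtain ⟨h₁, h₂⟩ := Prod.ext_iff.mp h
  simp only [Prod.fst_sub, Prod.snd_sub, Prod.fst_add, Prod.snd_add, Prod.smul_fst,
    Prod.smul_snd, smul_eq_mul, rot] at h₁ h₂
  unfold sqDist
  linear_combination
    (2 * Y.1 - (P₁.1 + P₂.1) - k * (P₁.2 - P₂.2) - 2 * (P₁.1 - P₂.1)) * h₁
      + (2 * Y.2 - (P₁.2 + P₂.2) + k * (P₁.1 - P₂.1) - 2 * (P₁.2 - P₂.2)) * h₂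

theorem sqDist_eq_dot (x y : K × K) : sqDist x y = dot (x - y) (x - y) := by
  simp only [sqDist, dot, Prod.fst_sub, Prod.snd_sub]
  ring

theorem sqDist_comm (x y : K × K) : sqDist x y = sqDist y x := by
  simp only [sqDist]
  ring

theorem sqDist_add_smul_add_smul_rot (U v : K × K) (p q t : K) :
    sqDist (U + p • v + q • rot v) (U + t • v) = ((p - t) ^ 2 + q ^ 2) * dot v v := by
  simp only [sqDist, dot, rot, Prod.fst_add, Prod.snd_add, Prod.smul_fst, Prod.smul_snd,
    smul_eq_mul]
  ring

theorem two_mul_dot_sub_eq_of_sqDist_eq {O X D Q : K × K} {t : K} (hX : X - O = t • (D - O))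
    (hQ : sqDist D Q = sqDist O Q) : 2 * dot (X - O) (Q - O) = dot (X - O) (D - O) := by
  obtain ⟨hX₁, hX₂⟩ := Prod.ext_iff.mp hX
  simp only [Prod.fst_sub, Prod.snd_sub, Prod.smul_fst, Prod.smul_snd, smul_eq_mul] at hX₁ hX₂
  simp only [sqDist, dot, Prod.fst_sub, Prod.snd_sub] at hQ ⊢
  linear_combination (2 * Q.1 - O.1 - D.1) * hX₁ + (2 * Q.2 - O.2 - D.2) * hX₂ - t * hQ

end CommRing

section Field

variable [Field K]

theorem exists_eq_smul_rot_of_dot_eq_zero {w z : K × K} (hw : w ≠ 0) (h : dot w z = 0) :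
    ∃ k : K, z = k • rot w := by
  unfold dot at h
  by_cases hw₁ : w.1 = 0
  · have hw₂ : w.2 ≠ 0 := fun hw₂ => hw (Prod.ext hw₁ hw₂)
    have hz₂ : z.2 = 0 := by simpa [hw₁, hw₂] using h
    exact ⟨-z.1 / w.2, Prod.ext (by simp [rot]; field_simp) (by simp [rot, hw₁, hz₂])⟩
  · refine ⟨z.2 / w.1, Prod.ext ?_ (by simp [rot]; field_simp)⟩
    simp only [rot, Prod.smul_mk, smul_eq_mul]
    field_simp
    linear_combination h

theorem collinear_of_forall_dot_sub_eq {s : Set (K × K)} {w P : K × K} {c : K} (hw : w ≠ 0)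
    (h : ∀ Y ∈ s, dot (Y - P) w = c) : Collinear K s := by
  rcases s.eq_empty_or_nonempty with rfl | ⟨p₀, hp₀⟩
  · exact collinear_empty K _
  refine (collinear_iff_of_mem hp₀).mpr ⟨rot w, fun p hp => ?_⟩
  obtain ⟨k, hk⟩ := exists_eq_smul_rot_of_dot_eq_zero hw (z := p - p₀) (by
    have h₁ := h p hp
    have h₂ := h p₀ hp₀
    simp only [dot, Prod.fst_sub, Prod.snd_sub] at h₁ h₂ ⊢
    linear_combination h₁ - h₂)
  exact ⟨k, by rw [← hk, vadd_eq_add, sub_add_cancel]⟩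

theorem exists_smul_rot_of_sqDist_eq {P₁ P₂ Y : K × K} (hP : P₁ ≠ P₂)
    (h : sqDist P₁ Y = sqDist P₂ Y) : ∃ k : K, (2 : K) • Y - (P₁ + P₂) = k • rot (P₁ - P₂) := by
  refine exists_eq_smul_rot_of_dot_eq_zero (sub_ne_zero.mpr hP) ?_
  simp only [sqDist, dot, Prod.fst_sub, Prod.snd_sub, Prod.fst_add, Prod.snd_add,
    Prod.smul_fst, Prod.smul_snd, smul_eq_mul] at h ⊢
  linear_combination -h

/- `O`, `X`, `D` lie on the perpendicular bisector of `P₁P₂`, at parameters `a`, `b`, `c` of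
`k ↦ (P₁ + P₂ + k • rot (P₁ - P₂)) / 2`. Equal distances to `P₁` force `c = -b`: the midpoint of
`P₁P₂` is that of `XD`, whence `⟪X - O, D - O⟫ = |P₁ - O|² - |P₁ - X|²`. -/
theorem exists_sub_eq_smul_sub_and_dot_eq_one [NeZero (2 : K)] {P₁ P₂ O X D : K × K} {L : K}
    (hP : P₁ ≠ P₂) (hXD : X ≠ D)
    (hO₁ : sqDist P₁ O = L) (hO₂ : sqDist P₂ O = L)
    (hX₁ : sqDist P₁ X = L - 1) (hX₂ : sqDist P₂ X = L - 1)
    (hD₁ : sqDist P₁ D = L - 1) (hD₂ : sqDist P₂ D = L - 1) :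
    ∃ t : K, X - O = t • (D - O) ∧ dot (X - O) (D - O) = 1 := by
  have h4 : (4 : K) ≠ 0 := by
    simpa [two_mul, ← two_add_two_eq_four] using mul_ne_zero (two_ne_zero' K) (two_ne_zero' K)
  obtain ⟨a, ha⟩ := exists_smul_rot_of_sqDist_eq hP (hO₁.trans hO₂.symm)
  obtain ⟨b, hb⟩ := exists_smul_rot_of_sqDist_eq hP (hX₁.trans hX₂.symm)
  obtain ⟨c, hc⟩ := exists_smul_rot_of_sqDist_eq hP (hD₁.trans hD₂.symm)
  have hO := hO₁ ▸ four_mul_sqDist_eq ha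
  have hX := hX₁ ▸ four_mul_sqDist_eq hb
  have hD := hD₁ ▸ four_mul_sqDist_eq hc
  have hN : sqDist P₁ P₂ ≠ 0 := fun hN =>
    h4 (by linear_combination hO - hX + (a ^ 2 - b ^ 2) * hN)
  have hbc : b ≠ c := by
    rintro rfl
    exact hXD <|
      smul_right_injective (K × K) two_ne_zero (sub_left_injective (hb.trans hc.symm))
  have hcb : c = -b := by
    have : (b - c) * (b + c) * sqDist P₁ P₂ = 0 := by linear_combination hD - hX
    exact eq_neg_of_add_eq_zero_right <|
      (mul_eq_zero.mp <| (mul_eq_zero.mp this).resolve_right hN).resolve_left (sub_ne_zero.mpr hbc)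
  have hca : c - a ≠ 0 := sub_ne_zero.mpr fun hca =>
    h4 (by linear_combination hO - hD - (c + a) * sqDist P₁ P₂ * hca)
  obtain ⟨ha₁, ha₂⟩ := Prod.ext_iff.mp ha
  obtain ⟨hb₁, hb₂⟩ := Prod.ext_iff.mp hb
  obtain ⟨hc₁, hc₂⟩ := Prod.ext_iff.mp hc
  simp only [Prod.fst_sub, Prod.snd_sub, Prod.fst_add, Prod.snd_add, Prod.smul_fst,
    Prod.smul_snd, smul_eq_mul, rot] at ha₁ ha₂ hb₁ hb₂ hc₁ hc₂
  refine ⟨(b - a) / (c - a), Prod.ext ?_ ?_, mul_left_cancel₀ h4 ?_⟩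
  · simp only [Prod.fst_sub, Prod.smul_fst, smul_eq_mul]
    rw [div_mul_eq_mul_div, eq_div_iff hca]
    refine mul_left_cancel₀ (two_ne_zero' K) ?_
    linear_combination (c - a) * (hb₁ - ha₁) - (b - a) * (hc₁ - ha₁)
  · simp only [Prod.snd_sub, Prod.smul_snd, smul_eq_mul]
    rw [div_mul_eq_mul_div, eq_div_iff hca]
    refine mul_left_cancel₀ (two_ne_zero' K) ?_
    linear_combination (c - a) * (hb₂ - ha₂) - (b - a) * (hc₂ - ha₂)
  · simp only [sqDist, dot, Prod.fst_sub, Prod.snd_sub] at hO hX ⊢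
    linear_combination 2 * (D.1 - O.1) * (hb₁ - ha₁) + 2 * (D.2 - O.2) * (hb₂ - ha₂)
      + (b - a) * (-(P₁.2 - P₂.2) * (hc₁ - ha₁) + (P₁.1 - P₂.1) * (hc₂ - ha₂))
      + (b - a) * ((P₁.1 - P₂.1) ^ 2 + (P₁.2 - P₂.2) ^ 2) * hcb - (hO - hX)

/-- Inversion in the unit circle centred at `O`. -/
def invert (O X : K × K) : K × K := O + (sqDist X O)⁻¹ • (X - O)

theorem sqDist_invert_self (O X : K × K) : sqDist (invert O X) O = (sqDist X O)⁻¹ := by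
  by_cases hX : sqDist X O = 0
  · simp only [invert, hX, inv_zero, zero_smul, add_zero]
    simp [sqDist]
  simp only [invert, sqDist, Prod.fst_add, Prod.snd_add, Prod.smul_fst, Prod.smul_snd,
    Prod.fst_sub, Prod.snd_sub, smul_eq_mul, add_sub_cancel_left] at hX ⊢
  field_simp

theorem sqDist_invert_eq_sub_one {O X P : K × K} (hX : sqDist X O ≠ 0)
    (hP : sqDist P X = sqDist P O - 1) : sqDist P (invert O X) = sqDist P O - 1 := by
  simp only [invert, sqDist, Prod.fst_add, Prod.snd_add, Prod.smul_fst, Prod.smul_snd,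
    Prod.fst_sub, Prod.snd_sub, smul_eq_mul] at hX hP ⊢
  field_simp
  linear_combination ((X.1 - O.1) ^ 2 + (X.2 - O.2) ^ 2) * hP

theorem sqDist_invert_of_two_mul_dot_eq_one {O X Q : K × K} (hX : sqDist X O ≠ 0)
    (hQ : 2 * dot (X - O) (Q - O) = 1) : sqDist (invert O X) Q = sqDist O Q := by
  simp only [invert, sqDist, dot, Prod.fst_add, Prod.snd_add, Prod.smul_fst, Prod.smul_snd,
    Prod.fst_sub, Prod.snd_sub, smul_eq_mul] at hX hQ ⊢
  field_simp
  linear_combination -((X.1 - O.1) ^ 2 + (X.2 - O.2) ^ 2) * hQ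

end Field

section Real

theorem dot_self_pos {v : ℝ × ℝ} (hv : v ≠ 0) : 0 < dot v v := by
  have : v.1 ≠ 0 ∨ v.2 ≠ 0 := by
    by_contra! h
    exact hv (Prod.ext h.1 h.2)
  unfold dot
  rcases this with h | h
  · nlinarith [mul_self_pos.mpr h, mul_self_nonneg v.2]
  · nlinarith [mul_self_pos.mpr h, mul_self_nonneg v.1]

theorem sqDist_pos {x y : ℝ × ℝ} (h : x ≠ y) : 0 < sqDist x y :=
  sqDist_eq_dot x y ▸ dot_self_pos (sub_ne_zero.mpr h)

theorem exists_ne_sqDist_eq {U V : ℝ × ℝ} {a b : ℝ}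
    (h : (sqDist U V + a - b) ^ 2 < 4 * a * sqDist U V) :
    ∃ Z₁ Z₂ : ℝ × ℝ, Z₁ ≠ Z₂ ∧ sqDist Z₁ U = a ∧ sqDist Z₁ V = b ∧
      sqDist Z₂ U = a ∧ sqDist Z₂ V = b := by
  obtain ⟨v, rfl⟩ : ∃ v, V = U + v := ⟨V - U, by abel⟩
  have hv : v ≠ 0 := by
    rintro rfl
    simp only [sqDist, add_zero, sub_self] at h
    nlinarith [sq_nonneg (a - b)]
  rw [show sqDist U (U + v) = dot v v by simpa using sqDist_add_smul_add_smul_rot U v 0 0 1] at h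
  set d := dot v v with hd
  have hd₀ : 0 < d := dot_self_pos hv
  obtain ⟨s, hs₀, hs⟩ : ∃ s : ℝ, 0 < s ∧ s ^ 2 = 4 * a * d - (d + a - b) ^ 2 :=
    ⟨_, Real.sqrt_pos.mpr (by linarith), Real.sq_sqrt (by linarith)⟩
  have hZ : ∀ σ : ℝ, σ ^ 2 = 1 →
      sqDist (U + ((d + a - b) / (2 * d)) • v + (σ * s / (2 * d)) • rot v) U = a ∧
      sqDist (U + ((d + a - b) / (2 * d)) • v + (σ * s / (2 * d)) • rot v) (U + v) = b := by
    intro σ hσ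
    have h₀ := sqDist_add_smul_add_smul_rot U v ((d + a - b) / (2 * d)) (σ * s / (2 * d)) 0
    have h₁ := sqDist_add_smul_add_smul_rot U v ((d + a - b) / (2 * d)) (σ * s / (2 * d)) 1
    rw [zero_smul, add_zero] at h₀
    rw [one_smul] at h₁
    rw [h₀, h₁, ← hd]
    constructor <;> field_simp <;> linear_combination hs + s ^ 2 * hσ
  obtain ⟨h₁U, h₁V⟩ := hZ 1 (by norm_num)
  obtain ⟨h₂U, h₂V⟩ := hZ (-1) (by norm_num)
  refine ⟨_, _, fun hZ₁₂ => ?_, h₁U, h₁V, h₂U, h₂V⟩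
  have hrot : rot v ≠ 0 := fun h₀ => hv (by simpa [rot, Prod.ext_iff, and_comm] using h₀)
  have := smul_left_injective ℝ hrot (add_left_cancel hZ₁₂)
  field_simp at this
  linarith

theorem exists_unit_direction_of_collinear {s : Set (ℝ × ℝ)} (hs : Collinear ℝ s) :
    ∃ p₀ e : ℝ × ℝ, dot e e = 1 ∧ ∀ p ∈ s, ∃ t : ℝ, p = p₀ + t • e := by
  obtain ⟨p₀, v, hv⟩ := (collinear_iff_exists_forall_eq_smul_vadd s).mp hs
  by_cases hv₀ : v = 0
  · refine ⟨p₀, (1, 0), by simp [dot], fun p hp => ⟨0, ?_⟩⟩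
    obtain ⟨r, rfl⟩ := hv p hp
    simp [hv₀]
  have hm := Real.sqrt_pos.mpr (dot_self_pos hv₀)
  refine ⟨p₀, (√(dot v v))⁻¹ • v, ?_, fun p hp => ?_⟩
  · have hsmul : ∀ c : ℝ, dot (c • v) (c • v) = c ^ 2 * dot v v := fun c => by
      simp only [dot, Prod.smul_fst, Prod.smul_snd, smul_eq_mul]
      ring
    rw [hsmul, inv_pow, Real.sq_sqrt (dot_self_pos hv₀).le,
      inv_mul_cancel₀ (dot_self_pos hv₀).ne']
  · obtain ⟨r, rfl⟩ := hv p hp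
    refine ⟨r * √(dot v v), ?_⟩
    rw [vadd_eq_add, add_comm, smul_smul, mul_assoc, mul_inv_cancel₀ hm.ne', mul_one]

theorem exists_two_mul_dot_eq_one_of_collinear {s : Set (ℝ × ℝ)} (hs : Collinear ℝ s)
    (hfin : s.Finite) :
    ∃ O Q : ℝ × ℝ, sqDist O Q = 1 / 4 ∧
      ∀ X ∈ s, 2 * dot (X - O) (Q - O) = 1 ∧ 1 < sqDist X O := by
  obtain ⟨p₀, e, he, hline⟩ := exists_unit_direction_of_collinear hs
  have he₀ : e ≠ 0 := by
    rintro rfl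
    simp [dot] at he
  have hline_inj : Function.Injective fun t : ℝ => p₀ + t • e :=
    fun t t' h => smul_left_injective ℝ he₀ (add_left_cancel h)
  obtain ⟨_, ⟨τ, rfl⟩, hτ⟩ :=
    (Set.infinite_range_of_injective hline_inj).exists_notMem_finite hfin
  refine ⟨p₀ + τ • e + rot e, p₀ + τ • e + (1 / 2 : ℝ) • rot e, ?_, fun X hX => ?_⟩
  · simp only [sqDist, dot, rot, Prod.fst_add, Prod.snd_add, Prod.smul_fst, Prod.smul_snd,
      smul_eq_mul] at he ⊢
    linear_combination he / 4
  obtain ⟨t, rfl⟩ := hline X hX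
  have ht : t - τ ≠ 0 := sub_ne_zero.mpr (by rintro rfl; exact hτ hX)
  simp only [sqDist, dot, rot, Prod.fst_add, Prod.snd_add, Prod.fst_sub, Prod.snd_sub,
    Prod.smul_fst, Prod.smul_snd, smul_eq_mul] at he ⊢
  constructor
  · linear_combination he
  · have : 0 < (t - τ) ^ 2 := by positivity
    nlinarith

end Real

def PreservesRatSqDist {F : Type*} [Field F] (f : ℝ × ℝ → F × F) : Prop :=
  ∀ x y : ℝ × ℝ, ∀ q : ℚ, 0 < q → sqDist x y = q → sqDist (f x) (f y) = q

namespace PreservesRatSqDist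

variable {F : Type*} [Field F] [CharZero F] {f : ℝ × ℝ → F × F}

theorem injective (hf : PreservesRatSqDist f) : Function.Injective f := by
  intro U V hUV
  by_contra hne
  have hd := sqDist_pos hne
  obtain ⟨q₁, hq₁, hq₁d⟩ := exists_rat_btwn (show sqDist U V / 4 < sqDist U V by linarith)
  obtain ⟨q₂, hq₁₂, hq₂⟩ := exists_rat_btwn hq₁d
  obtain ⟨Z, -, -, hZU, hZV, -, -⟩ :=
    exists_ne_sqDist_eq (U := U) (V := V) (a := q₁) (b := q₂) (by nlinarith)
  have h := hf Z U q₁ (by exact_mod_cast (by linarith : (0 : ℝ) < q₁)) hZU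
  rw [hUV, hf Z V q₂ (by exact_mod_cast (by linarith : (0 : ℝ) < q₂)) hZV] at h
  exact hq₁₂.ne' (by exact_mod_cast h)

theorem two_mul_dot_map_sub_eq_one (hf : PreservesRatSqDist f) {O Q X : ℝ × ℝ}
    (hOQ : sqDist O Q = 1 / 4) (hX : 2 * dot (X - O) (Q - O) = 1) (hXO : 1 < sqDist X O) :
    2 * dot (f X - f O) (f Q - f O) = 1 := by
  obtain ⟨L, hL⟩ := exists_rat_gt (sqDist X O)
  have hL₁ : (0 : ℚ) < L - 1 := by exact_mod_cast (by linarith : (0 : ℝ) < L - 1)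
  have hr : sqDist X O ≠ 0 := by positivity
  obtain ⟨P₁, P₂, hP, hP₁O, hP₁X, hP₂O, hP₂X⟩ :=
    exists_ne_sqDist_eq (U := O) (V := X) (a := L) (b := L - 1) (by rw [sqDist_comm]; nlinarith)
  have hXD : X ≠ invert O X := by
    intro h
    have := sqDist_invert_self O X
    rw [← h] at this
    field_simp at this
    nlinarith
  have hP_invert : ∀ P : ℝ × ℝ, sqDist P O = L → sqDist P X = L - 1 →
      sqDist P (invert O X) = L - 1 := fun P hPO hPX => by
    rw [sqDist_invert_eq_sub_one hr (by rw [hPX, hPO]), hPO]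
  have map_L : ∀ P Y : ℝ × ℝ, sqDist P Y = L → sqDist (f P) (f Y) = L :=
    fun P Y => hf P Y L (by linarith)
  have map_L_sub_one : ∀ P Y : ℝ × ℝ, sqDist P Y = L - 1 → sqDist (f P) (f Y) = (L : F) - 1 :=
    fun P Y h => by simpa using hf P Y (L - 1) hL₁ (by push_cast; exact h)
  have map_quarter : ∀ Y : ℝ × ℝ, sqDist Y Q = 1 / 4 → sqDist (f Y) (f Q) = ((1 / 4 : ℚ) : F) :=
    fun Y h => hf Y Q _ (by norm_num) (by rw [h]; norm_num)
  obtain ⟨t, hXD_parallel, hXD_dot⟩ := exists_sub_eq_smul_sub_and_dot_eq_one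
    (hf.injective.ne hP) (hf.injective.ne hXD)
    (map_L _ _ hP₁O) (map_L _ _ hP₂O) (map_L_sub_one _ _ hP₁X) (map_L_sub_one _ _ hP₂X)
    (map_L_sub_one _ _ (hP_invert _ hP₁O hP₁X)) (map_L_sub_one _ _ (hP_invert _ hP₂O hP₂X))
  rw [two_mul_dot_sub_eq_of_sqDist_eq hXD_parallel <|
    (map_quarter _ ((sqDist_invert_of_two_mul_dot_eq_one hr hX).trans hOQ)).trans
      (map_quarter O hOQ).symm, hXD_dot]

end PreservesRatSqDist

end Plane

open Plane

/-- `f : ℝ² → 𝔽²` preserves every distance `d > 0` with `d²` rational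
(`|x-y| = d` implies `φ (f x) (f y) = d²`). -/
theorem stmt_13 {F : Type*} [Field F] [Algebra ℝ F]
    (f : ℝ × ℝ → F × F)
    (hf : ∀ d : ℝ, 0 < d → (∃ q : ℚ, (q : ℝ) = d ^ 2) →
      ∀ x y : ℝ × ℝ, Real.sqrt ((x.1 - y.1) ^ 2 + (x.2 - y.2) ^ 2) = d →
        ((f x).1 - (f y).1) ^ 2 + ((f x).2 - (f y).2) ^ 2 = algebraMap ℝ F (d ^ 2))
    (A B C : ℝ × ℝ) (h : Collinear ℝ ({A, B, C} : Set (ℝ × ℝ))) :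
    Collinear F ({f A, f B, f C} : Set (F × F)) := by
  have : CharZero F := charZero_of_injective_algebraMap (algebraMap ℝ F).injective
  have hf' : PreservesRatSqDist f := by
    intro x y q hq hxy
    have hpos : (0 : ℝ) < sqDist x y := hxy ▸ Rat.cast_pos.mpr hq
    have := hf _ (Real.sqrt_pos.mpr hpos) ⟨q, by rw [Real.sq_sqrt hpos.le, hxy]⟩ x y rfl
    rwa [Real.sq_sqrt hpos.le, hxy, map_ratCast] at this
  obtain ⟨O, Q, hOQ, hline⟩ := exists_two_mul_dot_eq_one_of_collinear h (Set.toFinite _)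
  have hQO : f Q - f O ≠ 0 := sub_ne_zero.mpr <| hf'.injective.ne fun hOQ' => by
    simp [hOQ', sqDist] at hOQ
  rw [show ({f A, f B, f C} : Set (F × F)) = f '' {A, B, C} by simp [Set.image_insert_eq]]
  refine collinear_of_forall_dot_sub_eq hQO (P := f O) (c := 2⁻¹) ?_
  rintro _ ⟨X, hX, rfl⟩
  obtain ⟨hXQ, hXO⟩ := hline X hX
  exact eq_inv_of_mul_eq_one_right (hf'.two_mul_dot_map_sub_eq_one hOQ hXQ hXO)
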